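/- On a two-item list {x,y} in the partial cost model, the randomized algorithm COMB that runs BIT with probability 4/5 and TS with probability 1/5 is strictly 1.6-competitive. -/

import Mathlib

/-- Position (index in `τ`) of the `q`-th request to `b` (1-based `q`). -/
def occPos (τ : List Bool) (b : Bool) (q : ℕ) : ℕ :=
  ((List.range τ.length).filter (fun m => decide (τ[m]? = some b))).getD (q - 1) 0

/-- Two-item list state (`true` = `x` in front) of the critical request algorithm with
critical request functions `Fx`, `Fy` after serving `τ`, starting from the initial
state `init`: the item whose critical request is more recent is in front; an item
without critical request is behind one with a critical request, and if neither item
has a critical request the initial order persists. -/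
def critFront (init : Bool) (Fx Fy : ℕ → ℕ) (τ : List Bool) : Bool :=
  let qx := Fx (τ.count true)
  let qy := Fy (τ.count false)
  if qx = 0 then (if qy = 0 then init else false)
  else if qy = 0 then true
  else decide (occPos τ false qy < occPos τ true qx)

/-- Cost, in the partial cost model, of serving `σ` on the two-item list with online
state function `S` (front item after each prefix): 1 per change of state plus 1 per
request served at the rear position. -/
def cost2 (S : List Bool → Bool) (σ : List Bool) : ℕ :=
  ∑ m ∈ Finset.range σ.length,
    ((if S (σ.take m) = S (σ.take (m + 1)) then 0 else 1) +
     (if S (σ.take (m + 1)) = σ.getD m true then 0 else 1))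

/-- Optimal offline cost on the two-item list. -/
noncomputable def opt2 (s0 : Bool) (σ : List Bool) : ℕ :=
  sInf { c | ∃ f : ℕ → Bool,
    c = ∑ m ∈ Finset.range σ.length,
      ((if (if m = 0 then s0 else f (m - 1)) = f m then 0 else 1) +
       (if f m = σ.getD m true then 0 else 1)) }

/-- Critical request function of BIT with initial bit `b`: the critical request is
the last or second-to-last request, as `f(x^i) = (b + i) mod 2`. -/
def Fbit (b : Bool) (n : ℕ) : ℕ :=
  n - ((if b then 1 else 0) + n) % 2

/-- Critical request function of TS: `f(x^i) = 1`, i.e. the critical request is the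
second-to-last request. -/
def Fts (n : ℕ) : ℕ := n - 1

/-!
BIT and TS are critical request algorithms: each keeps in front the item whose critical request
is more recent, and the critical request is the last or the second-to-last request to the item
(for BIT according to the parity of the request count and the initial bit, for TS always the
second-to-last). Hence the list states of all five deterministic algorithms after a prefix are
functions of a finite summary of it: the request counts, capped at two but keeping their parity,
and the interleaving of the last two requests to `x` with the last two requests to `y`.
On this finite automaton a potential argument applies: with `k` the number of BIT variants whose
front item differs from OPT's, `Φ = 0, 1, 3, 5, 8` for `k = 0, …, 4` satisfies
`ΣBIT + TS + ΔΦ ≤ 8 OPT` on every request, as a finite check over all well-formed summaries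
confirms. Summing over `σ` gives `ΣBIT + TS ≤ 8 OPT`, that is `COMB ≤ 1.6 OPT`.
-/

def occList (τ : List Bool) (b : Bool) : List ℕ :=
  (List.range τ.length).filter (fun m => decide (τ[m]? = some b))

/-- Position of the `k`-th most recent request to `b` in `τ` (`k = 1` is the last one). -/
def recentPos (τ : List Bool) (b : Bool) (k : ℕ) : ℕ :=
  occPos τ b (τ.count b + 1 - k)

/-- The `i`-th most recent request to `y` comes before the `j`-th most recent request to `x`. -/
def Precedes (τ : List Bool) (i j : ℕ) : Prop :=
  i ≤ τ.count false ∧ j ≤ τ.count true ∧ recentPos τ false i < recentPos τ true j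

instance (τ : List Bool) (i j : ℕ) : Decidable (Precedes τ i j) :=
  inferInstanceAs (Decidable (_ ∧ _ ∧ _))

section Occurrences

variable (τ : List Bool) (b : Bool)

lemma count_append_singleton_of_ne {r : Bool} (h : r ≠ b) : (τ ++ [r]).count b = τ.count b := by
  simp [List.count_append, h]

lemma occPos_eq_getD (q : ℕ) : occPos τ b q = (occList τ b).getD (q - 1) 0 := rfl

lemma occList_append_singleton (r : Bool) :
    occList (τ ++ [r]) b = occList τ b ++ (if r = b then [τ.length] else []) := by
  unfold occList
  rw [List.length_append, List.length_singleton, List.range_succ, List.filter_append]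
  congr 1
  · refine List.filter_congr fun m hm => ?_
    rw [List.getElem?_append_left (List.mem_range.1 hm)]
  · by_cases h : r = b <;> simp [h]

lemma length_occList : (occList τ b).length = τ.count b := by
  induction τ using List.reverseRecOn with
  | nil => rfl
  | append_singleton σ r ih =>
    rw [occList_append_singleton, List.length_append, ih, List.count_append]
    by_cases h : r = b <;> simp [h]

variable {τ b}

lemma occPos_lt_length {q : ℕ} (h1 : 1 ≤ q) (h2 : q ≤ τ.count b) : occPos τ b q < τ.length := by
  have hq : q - 1 < (occList τ b).length := by rw [length_occList]; omega
  rw [occPos_eq_getD, List.getD_eq_getElem _ _ hq]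
  exact List.mem_range.1 (List.mem_filter.1 (List.getElem_mem hq)).1

lemma occPos_append_singleton (r : Bool) {q : ℕ} (h1 : 1 ≤ q) (h2 : q ≤ τ.count b) :
    occPos (τ ++ [r]) b q = occPos τ b q := by
  rw [occPos_eq_getD, occPos_eq_getD, occList_append_singleton]
  exact List.getD_append _ _ _ _ (by rw [length_occList]; omega)

lemma recentPos_lt_length {k : ℕ} (h1 : 1 ≤ k) (h2 : k ≤ τ.count b) :
    recentPos τ b k < τ.length :=
  occPos_lt_length (by omega) (by omega)

variable (τ b)

lemma recentPos_append_self_one : recentPos (τ ++ [b]) b 1 = τ.length := by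
  rw [recentPos, occPos_eq_getD, occList_append_singleton, if_pos rfl, List.count_append,
    List.count_singleton_self, List.getD_append_right _ _ _ _ (by rw [length_occList]; omega),
    length_occList]
  simp

variable {τ b}

lemma recentPos_append_self_succ {k : ℕ} (h1 : 1 ≤ k) (h2 : k ≤ τ.count b) :
    recentPos (τ ++ [b]) b (k + 1) = recentPos τ b k := by
  rw [recentPos, recentPos, List.count_append, List.count_singleton_self,
    show τ.count b + 1 + 1 - (k + 1) = τ.count b + 1 - k by omega]
  exact occPos_append_singleton b (by omega) (by omega)

lemma recentPos_append_of_ne {r : Bool} (hr : r ≠ b) {k : ℕ} (h1 : 1 ≤ k) (h2 : k ≤ τ.count b) :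
    recentPos (τ ++ [r]) b k = recentPos τ b k := by
  rw [recentPos, recentPos, count_append_singleton_of_ne τ b hr]
  exact occPos_append_singleton r (by omega) (by omega)

end Occurrences

section Precedes

variable {τ : List Bool} {i j : ℕ}

lemma precedes_append_true_one (hi : 1 ≤ i) :
    Precedes (τ ++ [true]) i 1 ↔ i ≤ τ.count false := by
  refine ⟨fun h => by simpa using h.1, fun h => ⟨by simpa using h, by simp, ?_⟩⟩
  rw [recentPos_append_of_ne (by decide) hi h, recentPos_append_self_one]
  exact recentPos_lt_length hi h

lemma precedes_append_true_succ (hi : 1 ≤ i) (hj : 1 ≤ j) :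
    Precedes (τ ++ [true]) i (j + 1) ↔ Precedes τ i j := by
  simp only [Precedes, List.count_append, List.count_singleton_self, List.count_singleton,
    Bool.true_beq, Bool.false_eq_true, if_false, add_zero, Nat.add_le_add_iff_right]
  refine and_congr_right fun hi' => and_congr_right fun hj' => ?_
  rw [recentPos_append_of_ne (by decide) hi hi', recentPos_append_self_succ hj hj']

lemma not_precedes_append_false_one (hj : 1 ≤ j) : ¬ Precedes (τ ++ [false]) 1 j := by
  rintro ⟨-, hj', h⟩
  have hj'' : j ≤ τ.count true := by simpa using hj'
  rw [recentPos_append_self_one, recentPos_append_of_ne (by decide) hj hj''] at h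
  exact absurd h (not_lt.2 (recentPos_lt_length hj hj'').le)

lemma precedes_append_false_succ (hi : 1 ≤ i) (hj : 1 ≤ j) :
    Precedes (τ ++ [false]) (i + 1) j ↔ Precedes τ i j := by
  simp only [Precedes, List.count_append, List.count_singleton_self, List.count_singleton,
    Bool.false_beq, Nat.add_le_add_iff_right]
  refine and_congr_right fun hi' => and_congr_right fun hj' => ?_
  rw [recentPos_append_of_ne (by decide) hj hj', recentPos_append_self_succ hi hi']

end Precedes

def capCount (n : ℕ) : ℕ := if n ≤ 1 then n else 2 + n % 2

lemma capCount_lt_four (n : ℕ) : capCount n < 4 := by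
  unfold capCount; split <;> omega

lemma capCount_capCount_add_one (n : ℕ) : capCount (capCount n + 1) = capCount (n + 1) := by
  unfold capCount; split_ifs <;> omega

lemma le_capCount_iff {k : ℕ} (hk : k ≤ 2) (n : ℕ) : k ≤ capCount n ↔ k ≤ n := by
  unfold capCount; split <;> omega

def cap (n : ℕ) : Fin 4 := ⟨capCount n, capCount_lt_four n⟩

@[simp] lemma cap_val (n : ℕ) : (cap n).val = capCount n := rfl

structure Summary where
  capX : Fin 4
  capY : Fin 4
  prec11 : Bool
  prec12 : Bool
  prec21 : Bool
  prec22 : Bool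
  deriving DecidableEq, Fintype

def summary (τ : List Bool) : Summary where
  capX := cap (τ.count true)
  capY := cap (τ.count false)
  prec11 := decide (Precedes τ 1 1)
  prec12 := decide (Precedes τ 1 2)
  prec21 := decide (Precedes τ 2 1)
  prec22 := decide (Precedes τ 2 2)

namespace Summary

def prec (s : Summary) : ℕ → ℕ → Bool
  | 1, 1 => s.prec11
  | 1, 2 => s.prec12
  | 2, 1 => s.prec21
  | 2, 2 => s.prec22
  | _, _ => false

def step (s : Summary) : Bool → Summary
  | true =>
    ⟨cap (s.capX + 1), s.capY, decide (1 ≤ s.capY.val), s.prec11, decide (2 ≤ s.capY.val),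
      s.prec21⟩
  | false => ⟨s.capX, cap (s.capY + 1), false, false, s.prec11, s.prec12⟩

/-- The invariant satisfied by every `summary τ`: the `prec` bits come from an actual
interleaving of the last two requests to `x` and the last two requests to `y`. -/
def WellFormed (s : Summary) : Prop :=
  (s.prec11 → 1 ≤ s.capX.val ∧ 1 ≤ s.capY.val) ∧ (s.prec21 → 1 ≤ s.capX.val ∧ 2 ≤ s.capY.val) ∧
    (s.prec12 → s.prec11) ∧ (s.prec22 → s.prec21) ∧
    (2 ≤ s.capY.val → (s.prec11 → s.prec21) ∧ (s.prec12 → s.prec22))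

instance : DecidablePred WellFormed := fun s => by unfold WellFormed; infer_instance

set_option maxRecDepth 10000 in
lemma wellFormed_step : ∀ s : Summary, s.WellFormed → ∀ r, (s.step r).WellFormed := by decide

end Summary

lemma summary_prec (τ : List Bool) {i j : ℕ} (hi : i = 1 ∨ i = 2) (hj : j = 1 ∨ j = 2) :
    (summary τ).prec i j = decide (Precedes τ i j) := by
  rcases hi with rfl | rfl <;> rcases hj with rfl | rfl <;> rfl

lemma cap_count_append_singleton_self (τ : List Bool) (b : Bool) :
    cap ((τ ++ [b]).count b) = cap ((cap (τ.count b)).val + 1) := by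
  simp only [cap, List.count_append, List.count_singleton_self, capCount_capCount_add_one]

lemma summary_append_singleton (τ : List Bool) (r : Bool) :
    summary (τ ++ [r]) = (summary τ).step r := by
  cases r
  · simp only [summary, Summary.step, Summary.mk.injEq, cap_count_append_singleton_self,
      count_append_singleton_of_ne τ true (show false ≠ true by decide), decide_eq_false_iff_not,
      not_precedes_append_false_one le_rfl, not_precedes_append_false_one one_le_two,
      ← precedes_append_false_succ le_rfl le_rfl, ← precedes_append_false_succ le_rfl one_le_two, not_false_eq_true, and_self]
  · simp only [summary, Summary.step, cap_count_append_singleton_self,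
      count_append_singleton_of_ne τ false (show true ≠ false by decide),
      precedes_append_true_one le_rfl, precedes_append_true_one one_le_two, cap_val,
      le_capCount_iff one_le_two, le_capCount_iff le_rfl,
      ← precedes_append_true_succ le_rfl le_rfl, ← precedes_append_true_succ one_le_two le_rfl]

lemma wellFormed_summary (τ : List Bool) : (summary τ).WellFormed := by
  induction τ using List.reverseRecOn with
  | nil => decide
  | append_singleton τ r ih => rw [summary_append_singleton]; exact Summary.wellFormed_step _ ih r

/-- `d n = 1` (resp. `2`) when, after `n` requests to an item, its critical request is its
last (resp. second-to-last) one; the critical request function is then `n ↦ n + 1 - d n`. -/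
structure IsCritDepth (d : ℕ → ℕ) : Prop where
  one_or_two (n : ℕ) : d n = 1 ∨ d n = 2
  capCount_eq (n : ℕ) : d (capCount n) = d n

def bitDepth (b : Bool) (n : ℕ) : ℕ := 1 + ((if b then 1 else 0) + n) % 2

lemma Fbit_eq (b : Bool) : Fbit b = fun n => n + 1 - bitDepth b n := by
  funext n; unfold Fbit bitDepth; omega

lemma Fts_eq : Fts = fun n => n + 1 - 2 := by
  funext n; unfold Fts; omega

lemma isCritDepth_bitDepth (b : Bool) : IsCritDepth (bitDepth b) where
  one_or_two n := by unfold bitDepth; omega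
  capCount_eq n := by unfold bitDepth capCount; split_ifs <;> omega

lemma isCritDepth_two : IsCritDepth fun _ => 2 := ⟨fun _ => Or.inr rfl, fun _ => rfl⟩

lemma IsCritDepth.capCount_lt_iff {d : ℕ → ℕ} (hd : IsCritDepth d) (n : ℕ) :
    capCount n < d (capCount n) ↔ n < d n := by
  rw [hd.capCount_eq, ← not_le, ← not_le, le_capCount_iff]
  rcases hd.one_or_two n with h | h <;> omega

namespace Summary

def front (init : Bool) (dx dy : ℕ → ℕ) (s : Summary) : Bool :=
  if s.capX.val < dx s.capX then (if s.capY.val < dy s.capY then init else false)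
  else if s.capY.val < dy s.capY then true
  else s.prec (dy s.capY) (dx s.capX)

end Summary

theorem critFront_eq_front {dx dy : ℕ → ℕ} (hx : IsCritDepth dx) (hy : IsCritDepth dy)
    (init : Bool) (τ : List Bool) :
    critFront init (fun n => n + 1 - dx n) (fun n => n + 1 - dy n) τ =
      (summary τ).front init dx dy := by
  have hX : (summary τ).capX.val < dx (summary τ).capX ↔ τ.count true < dx (τ.count true) :=
    hx.capCount_lt_iff _
  have hY : (summary τ).capY.val < dy (summary τ).capY ↔ τ.count false < dy (τ.count false) :=
    hy.capCount_lt_iff _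
  have hzX : τ.count true + 1 - dx (τ.count true) = 0 ↔ τ.count true < dx (τ.count true) := by
    omega
  have hzY : τ.count false + 1 - dy (τ.count false) = 0 ↔ τ.count false < dy (τ.count false) := by
    omega
  simp only [critFront, Summary.front, hX, hY, hzX, hzY]
  split_ifs with hnx _ hny
  · rfl
  · rfl
  · rfl
  rw [summary_prec τ (hy.one_or_two _) (hx.one_or_two _)]
  simp only [summary, cap_val, hx.capCount_eq, hy.capCount_eq, Precedes, not_lt.1 hnx,
    not_lt.1 hny, true_and, recentPos]

/-- The front item changes from `a` to `b`, then `r` is served. -/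
def stepCost (a b r : Bool) : ℕ := (if a = b then 0 else 1) + (if b = r then 0 else 1)

lemma cost2_append_singleton (S : List Bool → Bool) (σ : List Bool) (r : Bool) :
    cost2 S (σ ++ [r]) = cost2 S σ + stepCost (S σ) (S (σ ++ [r])) r := by
  unfold cost2
  rw [List.length_append, List.length_singleton, Finset.sum_range_succ]
  congr 1
  · refine Finset.sum_congr rfl fun m hm => ?_
    have hm : m < σ.length := Finset.mem_range.1 hm
    rw [List.take_append_of_le_length hm.le, List.take_append_of_le_length hm,
      List.getD_append _ _ _ _ hm]
  · rw [List.take_append_of_le_length le_rfl, List.take_length,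
      List.take_of_length_le (by simp), List.getD_append_right _ _ _ _ le_rfl]
    simp [stepCost]

namespace Summary

variable (init : Bool) (s : Summary)

def algStepCost (dx dy : ℕ → ℕ) (r : Bool) : ℕ :=
  stepCost (s.front init dx dy) ((s.step r).front init dx dy) r

def combStepCost (r : Bool) : ℕ :=
  ∑ p : Bool × Bool, s.algStepCost init (bitDepth p.1) (bitDepth p.2) r +
    s.algStepCost init (fun _ => 2) (fun _ => 2) r

/-- With these weights, `potential init s o` is, for well-formed `s`, the largest excess of
`5 COMB` over `8 OPT` on any continuation from `s` when OPT's front item is `o`. -/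
def potentialWeight : ℕ → ℕ
  | 0 => 0
  | 1 => 1
  | 2 => 3
  | 3 => 5
  | _ => 8

def potential (o : Bool) : ℕ :=
  potentialWeight
    (Finset.univ.filter fun p : Bool × Bool => s.front init (bitDepth p.1) (bitDepth p.2) ≠ o).card

end Summary

set_option maxRecDepth 100000 in
theorem Summary.combStepCost_add_potential_le :
    ∀ init (s : Summary), s.WellFormed → ∀ r o o',
      s.combStepCost init r + (s.step r).potential init o' ≤
        8 * stepCost o o' r + s.potential init o := by
  decide

lemma cost2_critFront_append_singleton {dx dy : ℕ → ℕ} (hx : IsCritDepth dx)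
    (hy : IsCritDepth dy) (init : Bool) (σ : List Bool) (r : Bool) :
    cost2 (critFront init (fun n => n + 1 - dx n) (fun n => n + 1 - dy n)) (σ ++ [r]) =
      cost2 (critFront init (fun n => n + 1 - dx n) (fun n => n + 1 - dy n)) σ +
        (summary σ).algStepCost init dx dy r := by
  rw [cost2_append_singleton, critFront_eq_front hx hy, critFront_eq_front hx hy,
    summary_append_singleton, Summary.algStepCost]

/-- Five times the expected cost of COMB on `σ`. -/
def combCost (init : Bool) (σ : List Bool) : ℕ :=
  ∑ p : Bool × Bool, cost2 (critFront init (Fbit p.1) (Fbit p.2)) σ +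
    cost2 (critFront init Fts Fts) σ

lemma combCost_append_singleton (init : Bool) (σ : List Bool) (r : Bool) :
    combCost init (σ ++ [r]) = combCost init σ + (summary σ).combStepCost init r := by
  simp only [combCost, Summary.combStepCost, Fbit_eq, Fts_eq,
    cost2_critFront_append_singleton (isCritDepth_bitDepth _) (isCritDepth_bitDepth _),
    cost2_critFront_append_singleton isCritDepth_two isCritDepth_two, Finset.sum_add_distrib]
  ring

/-- The front item of an offline algorithm with states `f` just before serving request `m`. -/
def offlineFront (s0 : Bool) (f : ℕ → Bool) (m : ℕ) : Bool := if m = 0 then s0 else f (m - 1)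

def offlineCost (s0 : Bool) (f : ℕ → Bool) (σ : List Bool) : ℕ :=
  ∑ m ∈ Finset.range σ.length, stepCost (offlineFront s0 f m) (f m) (σ.getD m true)

lemma exists_opt2_eq_offlineCost (s0 : Bool) (σ : List Bool) :
    ∃ f, opt2 s0 σ = offlineCost s0 f σ :=
  Nat.sInf_mem (s := {c | ∃ f, c = offlineCost s0 f σ}) ⟨_, fun _ => true, rfl⟩

lemma offlineCost_append_singleton (s0 : Bool) (f : ℕ → Bool) (σ : List Bool) (r : Bool) :
    offlineCost s0 f (σ ++ [r]) =
      offlineCost s0 f σ + stepCost (offlineFront s0 f σ.length) (f σ.length) r := by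
  unfold offlineCost
  rw [List.length_append, List.length_singleton, Finset.sum_range_succ,
    List.getD_append_right _ _ _ _ le_rfl]
  congr 1
  · refine Finset.sum_congr rfl fun m hm => ?_
    rw [List.getD_append _ _ _ _ (Finset.mem_range.1 hm)]
  · simp

lemma potential_summary_nil (init : Bool) : (summary []).potential init init = 0 := by
  cases init <;> decide

theorem combCost_add_potential_le (init : Bool) (f : ℕ → Bool) (σ : List Bool) :
    combCost init σ + (summary σ).potential init (offlineFront init f σ.length) ≤
      8 * offlineCost init f σ := by
  induction σ using List.reverseRecOn with
  | nil => simp [combCost, cost2, offlineCost, offlineFront, potential_summary_nil]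
  | append_singleton σ r ih =>
    have hstep := (summary σ).combStepCost_add_potential_le init (wellFormed_summary σ) r
      (offlineFront init f σ.length) (f σ.length)
    rw [combCost_append_singleton, offlineCost_append_singleton, summary_append_singleton,
      List.length_append, List.length_singleton, offlineFront, if_neg σ.length.succ_ne_zero,
      Nat.add_sub_cancel]
    omega

/-- On a two-item list in the partial cost model, COMB — run BIT
(with both bits uniformly random) with probability 4/5 and TS with probability 1/5 —
is strictly 1.6-competitive, for both initial list states. -/
theorem comb_strictly_16_competitive (init : Bool) (σ : List Bool) :
    (4 / 5 : ℝ) *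
        ((1 / 4) * ∑ p : Bool × Bool,
          (cost2 (critFront init (Fbit p.1) (Fbit p.2)) σ : ℝ)) +
      (1 / 5) * (cost2 (critFront init Fts Fts) σ : ℝ)
      ≤ 1.6 * (opt2 init σ : ℝ) := by
  obtain ⟨f, hf⟩ := exists_opt2_eq_offlineCost init σ
  have h : combCost init σ ≤ 8 * opt2 init σ :=
    hf ▸ (Nat.le_add_right _ _).trans (combCost_add_potential_le init f σ)
  have hR : (combCost init σ : ℝ) ≤ 8 * opt2 init σ := by exact_mod_cast h
  simp only [combCost, Nat.cast_add, Nat.cast_sum] at hR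
  linarith
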